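/- Triangle inequality for ℓ-box norms: if e is a finite set with |e| ≥ 2, ℓ ≥ 2 is an even integer, and f, g are integrable functions on the product probability space X_e with finite ℓ-box norms, then ‖f + g‖_{□_ℓ(X_e)} ≤ ‖f‖_{□_ℓ(X_e)} + ‖g‖_{□_ℓ(X_e)}. -/

import Mathlib

/-!
Write `k = |ι|` and `N = ℓ ^ k` for the number of vertices `ω` of the box. Expanding the product
of `(f + g)(x^{(ω)})` over all vertices writes `‖f + g‖ ^ N` as a sum of `2 ^ N` mixed box
integrals, one for each set `t` of vertices carrying `f`. By the Gowers–Cauchy–Schwarz inequality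
the mixed integral for `t` is at most `‖f‖ ^ #t * ‖g‖ ^ (N - #t)`, and the binomial theorem
bounds the sum by `(‖f‖ + ‖g‖) ^ N`.

Gowers–Cauchy–Schwarz is proved one coordinate `a` at a time. Integrating out the `ℓ` copies of
`X a` first turns the box integrand into a product of `ℓ` functions `q j` of the other variables,
and Hölder's inequality with `ℓ` equal exponents bounds its integral by `∏ j, (∫ q j ^ ℓ) ^ (1/ℓ)`.
Since `ℓ` is even, `∫ q j ^ ℓ` is the (nonnegative) box integral in which the `a`-th coordinate of
every vertex is set to `j`. The same argument applied to absolute values shows that all the mixed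
products are integrable.
-/

open MeasureTheory Finset

/-- The `ℓ`-box norm over the coordinates in `e` of a function `f` on the product
of the probability spaces `(X i, μ i)`. -/
noncomputable def boxNormOn {ι : Type*} [Fintype ι] [DecidableEq ι] {X : ι → Type*}
    [∀ i, MeasurableSpace (X i)] (μ : ∀ i, Measure (X i))
    (e : Finset ι) (ℓ : ℕ) (f : (∀ i, X i) → ℝ) : ℝ :=
  (∫ x : ∀ i, Fin ℓ → X i,
      ∏ ω ∈ Finset.univ.filter (fun ω : ι → Fin ℓ => ∀ i ∉ e, (ω i : ℕ) = 0),
        f (fun i => x i (ω i))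
    ∂(Measure.pi fun i => Measure.pi fun _ : Fin ℓ => μ i)) ^ (((ℓ : ℝ) ^ e.card)⁻¹)

open Function

open scoped ENNReal

theorem enorm_prod {β R : Type*} [SeminormedCommRing R] [NormMulClass R] [NormOneClass R]
    (s : Finset β) (f : β → R) : ‖∏ b ∈ s, f b‖ₑ = ∏ b ∈ s, ‖f b‖ₑ := by
  simp only [enorm_eq_nnnorm, nnnorm_prod, ENNReal.ofNNReal_finsetProd]

section Holder

variable {A κ : Type*} [MeasurableSpace A] [Fintype κ] {α : Measure A}

theorem lintegral_prod_pow_card_le {u : κ → A → ℝ≥0∞} (hu : ∀ j, AEMeasurable (u j) α) :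
    (∫⁻ a, ∏ j, u j a ∂α) ^ Fintype.card κ ≤ ∏ j, ∫⁻ a, u j a ^ Fintype.card κ ∂α := by
  set n := Fintype.card κ
  rcases eq_or_ne n 0 with hn | hn
  · have : IsEmpty κ := Fintype.card_eq_zero_iff.1 hn
    simp [hn]
  have hp : ∑ _j : κ, (n⁻¹ : ℝ) = 1 := by simp [n, hn]
  have holder := ENNReal.lintegral_prod_norm_pow_le univ (fun j _ => (hu j).pow_const n) hp
    fun _ _ => by positivity
  simp only [ENNReal.pow_rpow_inv_natCast hn] at holder
  calc (∫⁻ a, ∏ j, u j a ∂α) ^ n ≤ (∏ j, (∫⁻ a, u j a ^ n ∂α) ^ (n⁻¹ : ℝ)) ^ n := by gcongr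
    _ = ∏ j, ∫⁻ a, u j a ^ n ∂α := by simp only [← prod_pow, ENNReal.rpow_inv_natCast_pow hn]

theorem abs_integral_prod_pow_card_le {q : κ → A → ℝ} (hq : ∀ j, AEStronglyMeasurable (q j) α)
    (hint : ∀ j, Integrable (fun a => |q j a| ^ Fintype.card κ) α) :
    |∫ a, ∏ j, q j a ∂α| ^ Fintype.card κ ≤ ∏ j, ∫ a, |q j a| ^ Fintype.card κ ∂α := by
  set n := Fintype.card κ
  have hnonneg : ∀ j, 0 ≤ ∫ a, |q j a| ^ n ∂α := fun j => integral_nonneg fun a => by positivity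
  rw [← ENNReal.ofReal_le_ofReal_iff (prod_nonneg fun j _ => hnonneg j),
    ENNReal.ofReal_prod_of_nonneg fun j _ => hnonneg j]
  calc ENNReal.ofReal (|∫ a, ∏ j, q j a ∂α| ^ n) = ‖∫ a, ∏ j, q j a ∂α‖ₑ ^ n := by
        rw [ENNReal.ofReal_pow (abs_nonneg _), ← Real.enorm_eq_ofReal_abs]
    _ ≤ (∫⁻ a, ∏ j, ‖q j a‖ₑ ∂α) ^ n := by
        gcongr
        simpa only [enorm_prod] using enorm_integral_le_lintegral_enorm (μ := α) (∏ j, q j ·)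
    _ ≤ ∏ j, ∫⁻ a, ‖q j a‖ₑ ^ n ∂α := lintegral_prod_pow_card_le fun j => (hq j).enorm
    _ = ∏ j, ENNReal.ofReal (∫ a, |q j a| ^ n ∂α) := by
        refine prod_congr rfl fun j _ => ?_
        rw [ofReal_integral_eq_lintegral_ofReal (hint j) (ae_of_all _ fun a => by positivity)]
        simp only [Real.enorm_eq_ofReal_abs, ENNReal.ofReal_pow (abs_nonneg _)]

end Holder

theorem MeasureTheory.lintegral_fintype_prod_eq_prod {κ : Type*} [Fintype κ] {E : κ → Type*}
    [∀ j, MeasurableSpace (E j)] (ν : ∀ j, Measure (E j)) [∀ j, IsProbabilityMeasure (ν j)]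
    {g : ∀ j, E j → ℝ≥0∞} (hg : ∀ j, Measurable (g j)) :
    ∫⁻ x, ∏ j, g j (x j) ∂Measure.pi ν = ∏ j, ∫⁻ y, g j y ∂ν j := by
  rw [ProbabilityTheory.lintegral_prod_eq_prod_lintegral_of_indepFun univ _
    (ProbabilityTheory.iIndepFun_pi fun j => (hg j).aemeasurable)
    fun j => (hg j).comp (measurable_pi_apply j)]
  exact prod_congr rfl fun j _ => (measurePreserving_eval ν j).lintegral_comp (hg j)

section HolderOnProduct

variable {A B κ : Type*} [MeasurableSpace A] [MeasurableSpace B] [Fintype κ]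
  (α : Measure A) (β : Measure B)

theorem lintegral_prod_pi_prod [IsProbabilityMeasure β] {g : κ → A × B → ℝ≥0∞}
    (hg : ∀ j, Measurable (g j)) :
    ∫⁻ w, ∏ j, g j (w.1, w.2 j) ∂α.prod (Measure.pi fun _ : κ => β) =
      ∫⁻ a, ∏ j, ∫⁻ b, g j (a, b) ∂β ∂α := by
  rw [lintegral_prod _ (by fun_prop)]
  exact lintegral_congr fun a =>
    lintegral_fintype_prod_eq_prod _ fun j => (hg j).comp measurable_prodMk_left

theorem integral_prod_pi_prod [SigmaFinite α] [SigmaFinite β] {G : κ → A × B → ℝ}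
    (hG : Integrable (fun w => ∏ j, G j (w.1, w.2 j)) (α.prod (Measure.pi fun _ : κ => β))) :
    ∫ w, ∏ j, G j (w.1, w.2 j) ∂α.prod (Measure.pi fun _ : κ => β) =
      ∫ a, ∏ j, ∫ b, G j (a, b) ∂β ∂α := by
  rw [integral_prod _ hG]
  exact integral_congr_ae <| ae_of_all _ fun a =>
    integral_fintype_prod_eq_prod fun j b => G j (a, b)

theorem integrable_prod_of_integrable_diag [SigmaFinite α] [IsProbabilityMeasure β] [Nonempty κ]
    {G : κ → A × B → ℝ} (hG : ∀ j, Measurable (G j))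
    (hD : ∀ j, Integrable (fun w => ∏ k, G j (w.1, w.2 k)) (α.prod (Measure.pi fun _ : κ => β))) :
    Integrable (fun w => ∏ j, G j (w.1, w.2 j)) (α.prod (Measure.pi fun _ : κ => β)) := by
  have hmeas : Measurable fun w : A × (κ → B) => ∏ j, G j (w.1, w.2 j) := by fun_prop
  refine ⟨hmeas.aestronglyMeasurable, ?_⟩
  set u : κ → A → ℝ≥0∞ := fun j a => ∫⁻ b, ‖G j (a, b)‖ₑ ∂β
  have hu : ∀ j, ∫⁻ a, u j a ^ Fintype.card κ ∂α < ∞ := fun j => by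
    simpa only [HasFiniteIntegral, enorm_prod, lintegral_prod_pi_prod α β fun _ => (hG j).enorm,
      prod_const, card_univ] using (hD j).hasFiniteIntegral
  have hP : (∫⁻ a, ∏ j, u j a ∂α) ^ Fintype.card κ < ∞ :=
    (lintegral_prod_pow_card_le fun j => (hG j).enorm.lintegral_prod_right'.aemeasurable).trans_lt
      (ENNReal.prod_lt_top fun j _ => hu j)
  rw [HasFiniteIntegral]
  simp only [enorm_prod, lintegral_prod_pi_prod α β fun j => (hG j).enorm]
  exact (ENNReal.pow_lt_top_iff.1 hP).resolve_right Fintype.card_ne_zero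

theorem abs_integral_prod_pow_le_prod_integral_diag [SigmaFinite α] [SigmaFinite β]
    (hκ : Even (Fintype.card κ)) {G : κ → A × B → ℝ} (hG : ∀ j, Measurable (G j))
    (hP : Integrable (fun w => ∏ j, G j (w.1, w.2 j)) (α.prod (Measure.pi fun _ : κ => β)))
    (hD : ∀ j, Integrable (fun w => ∏ k, G j (w.1, w.2 k)) (α.prod (Measure.pi fun _ : κ => β))) :
    |∫ w, ∏ j, G j (w.1, w.2 j) ∂α.prod (Measure.pi fun _ : κ => β)| ^ Fintype.card κ ≤
      ∏ j, ∫ w, ∏ k, G j (w.1, w.2 k) ∂α.prod (Measure.pi fun _ : κ => β) := by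
  have hdiag : ∀ j a, ∫ y, ∏ k, G j (a, y k) ∂Measure.pi (fun _ : κ => β) =
      |∫ b, G j (a, b) ∂β| ^ Fintype.card κ := fun j a => by
    rw [integral_fintype_prod_eq_pow fun b => G j (a, b), hκ.pow_abs]
  have hD_eq : ∀ j, ∫ w, ∏ k, G j (w.1, w.2 k) ∂α.prod (Measure.pi fun _ : κ => β) =
      ∫ a, |∫ b, G j (a, b) ∂β| ^ Fintype.card κ ∂α := fun j => by
    rw [integral_prod _ (hD j)]
    exact integral_congr_ae (ae_of_all _ (hdiag j))
  simp only [integral_prod_pi_prod α β hP, hD_eq]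
  exact abs_integral_prod_pow_card_le
    (fun j => (hG j).stronglyMeasurable.integral_prod_right'.aestronglyMeasurable)
    fun j => (hD j).integral_prod_left.congr (ae_of_all _ (hdiag j))

theorem integral_prod_diag_nonneg [SigmaFinite α] [SigmaFinite β] (hκ : Even (Fintype.card κ))
    (G : A × B → ℝ) : 0 ≤ ∫ w, ∏ k : κ, G (w.1, w.2 k) ∂α.prod (Measure.pi fun _ : κ => β) := by
  by_cases hD : Integrable (fun w => ∏ k : κ, G (w.1, w.2 k)) (α.prod (Measure.pi fun _ : κ => β))
  · rw [integral_prod _ hD]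
    refine integral_nonneg fun a => ?_
    rw [integral_fintype_prod_eq_pow fun b => G (a, b)]
    exact hκ.pow_nonneg _
  · rw [integral_undef hD]

end HolderOnProduct

theorem MeasureTheory.measurePreserving_update {ι : Type*} [Fintype ι] [DecidableEq ι]
    {Y : ι → Type*} [∀ i, MeasurableSpace (Y i)] (ν : ∀ i, Measure (Y i))
    [∀ i, IsProbabilityMeasure (ν i)] (a : ι) :
    MeasurePreserving (fun p : (∀ i, Y i) × Y a => update p.1 a p.2)
      ((Measure.pi ν).prod (ν a)) (Measure.pi ν) := by
  refine ⟨measurable_update', (Measure.pi_eq fun s hs => ?_).symm⟩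
  have hpre : (fun p : (∀ i, Y i) × Y a => update p.1 a p.2) ⁻¹' Set.univ.pi s =
      Set.univ.pi (update s a Set.univ) ×ˢ s a := by
    ext ⟨z, y⟩
    simp only [Set.mem_preimage, Set.mem_univ_pi, Set.mem_prod]
    rw [forall_update_iff _ (fun i x => x ∈ s i),
      forall_update_iff _ (fun i (t : Set (Y i)) => z i ∈ t)]
    simp [and_comm]
  rw [Measure.map_apply measurable_update' (.univ_pi hs), hpre, Measure.prod_prod, Measure.pi_pi,
    ← mul_prod_erase univ _ (mem_univ a), ← mul_prod_erase univ (fun i => ν i (s i)) (mem_univ a)]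
  simp only [update_self, measure_univ, one_mul, mul_comm]
  congr 1
  exact prod_congr rfl fun i hi => by rw [update_of_ne (ne_of_mem_erase hi)]

theorem Fintype.prod_prod_update {ι β M : Type*} [Fintype ι] [DecidableEq ι] [Fintype β]
    [DecidableEq β] [CommMonoid M] (F : (ι → β) → M) (a : ι) :
    ∏ τ, ∏ j, F (update τ a j) = ∏ τ, F τ ^ Fintype.card β := by
  let e : (ι → β) × β ≃ (ι → β) × β :=
    { toFun := fun p => (update p.1 a p.2, p.1 a)
      invFun := fun p => (update p.1 a p.2, p.1 a)
      left_inv := fun p => by simp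
      right_inv := fun p => by simp }
  rw [← Fintype.prod_prod_type', ← e.prod_comp]
  simp [e, Fintype.prod_prod_type, prod_const]

theorem Finset.piecewise_update_of_notMem {ι β : Type*} [DecidableEq ι] {S : Finset ι} {a : ι}
    (ha : a ∉ S) (τ ω : ι → β) (j : β) :
    S.piecewise τ (update ω a j) = (insert a S).piecewise (update τ a j) ω := by
  ext i
  by_cases hi : i = a
  · subst hi; simp [ha]
  · by_cases hiS : i ∈ S <;> simp [Finset.piecewise, hi, hiS]

theorem Finset.prod_ite_mem_univ {α M : Type*} [Fintype α] [DecidableEq α] [CommMonoid M]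
    (t : Finset α) (u v : α → M) :
    ∏ x, (if x ∈ t then u x else v x) = (∏ x ∈ t, u x) * ∏ x ∈ univ \ t, v x := by
  rw [prod_ite, filter_mem_eq_inter, univ_inter, ← sdiff_eq_filter]

section Box

variable {ι : Type*} {X : ι → Type*} {ℓ : ℕ}

-- `boxPoint ω z` is the vertex `x^{(ω)}` of the paper, with `z i j` standing for `x_i^{(j)}`.
def boxPoint (ω : ι → Fin ℓ) (z : ∀ i, Fin ℓ → X i) : ∀ i, X i := fun i => z i (ω i)

section Combinatorics

variable [DecidableEq ι]

theorem boxPoint_update (ω : ι → Fin ℓ) (z : ∀ i, Fin ℓ → X i) (a : ι) (y : Fin ℓ → X a) :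
    boxPoint ω (update z a y) = update (boxPoint ω z) a (y (ω a)) := by
  ext i
  by_cases hi : i = a
  · subst hi; simp [boxPoint]
  · simp [boxPoint, hi]

theorem update_boxPoint_update (ω : ι → Fin ℓ) (z : ∀ i, Fin ℓ → X i) (a : ι) (j : Fin ℓ)
    (x : X a) : update (boxPoint (update ω a j) z) a x = update (boxPoint ω z) a x := by
  ext i
  by_cases hi : i = a
  · subst hi; simp
  · simp [boxPoint, hi]

variable [Fintype ι]

def boxProd (H : (ι → Fin ℓ) → (∀ i, X i) → ℝ) (z : ∀ i, Fin ℓ → X i) : ℝ :=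
  ∏ ω, H ω (boxPoint ω z)

def boxSlice (H : (ι → Fin ℓ) → (∀ i, X i) → ℝ) (a : ι) (j : Fin ℓ)
    (p : (∀ i, Fin ℓ → X i) × X a) : ℝ :=
  ∏ ω ∈ univ.filter (fun ω : ι → Fin ℓ => ω a = j), H ω (update (boxPoint ω p.1) a p.2)

theorem boxProd_update_eq_prod_fiber (H : (ι → Fin ℓ) → (∀ i, X i) → ℝ)
    (z : ∀ i, Fin ℓ → X i) (a : ι) (y : Fin ℓ → X a) :
    boxProd H (update z a y) =
      ∏ k, ∏ ω ∈ univ.filter (fun ω : ι → Fin ℓ => ω a = k),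
        H ω (update (boxPoint ω z) a (y k)) := by
  rw [boxProd, ← prod_fiberwise univ (fun ω => ω a)]
  refine prod_congr rfl fun k _ => prod_congr rfl fun ω hω => ?_
  rw [boxPoint_update, (mem_filter.1 hω).2]

theorem boxProd_update (H : (ι → Fin ℓ) → (∀ i, X i) → ℝ) (z : ∀ i, Fin ℓ → X i) (a : ι)
    (y : Fin ℓ → X a) : boxProd H (update z a y) = ∏ j, boxSlice H a j (z, y j) :=
  boxProd_update_eq_prod_fiber H z a y

theorem boxProd_comp_update_update (H : (ι → Fin ℓ) → (∀ i, X i) → ℝ) (z : ∀ i, Fin ℓ → X i)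
    (a : ι) (j : Fin ℓ) (y : Fin ℓ → X a) :
    boxProd (fun ω => H (update ω a j)) (update z a y) = ∏ k, boxSlice H a j (z, y k) := by
  rw [boxProd_update_eq_prod_fiber]
  refine prod_congr rfl fun k _ => ?_
  refine prod_nbij' (fun ω => update ω a j) (fun ω => update ω a k) ?_ ?_ ?_ ?_ ?_
  · simp
  · simp
  · intro ω hω
    rw [← (mem_filter.1 hω).2, update_idem, update_eq_self]
  · intro ω hω
    rw [← (mem_filter.1 hω).2, update_idem, update_eq_self]
  · intro ω _
    rw [update_boxPoint_update]

theorem boxProd_add_eq_sum (f g : (∀ i, X i) → ℝ) (z : ∀ i, Fin ℓ → X i) :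
    boxProd (fun _ : ι → Fin ℓ => fun x => f x + g x) z =
      ∑ t : Finset (ι → Fin ℓ), boxProd (fun ω => if ω ∈ t then f else g) z := by
  simp [boxProd, prod_add, ite_apply, prod_ite_mem_univ]

end Combinatorics

variable [∀ i, MeasurableSpace (X i)]

theorem measurable_boxPoint (ω : ι → Fin ℓ) : Measurable (boxPoint (X := X) ω) :=
  measurable_pi_lambda _ fun i => (measurable_pi_apply (ω i)).comp (measurable_pi_apply i)

variable [Fintype ι] (μ : ∀ i, Measure (X i))

noncomputable def boxMeasure (ℓ : ℕ) : Measure (∀ i, Fin ℓ → X i) :=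
  Measure.pi fun i => Measure.pi fun _ : Fin ℓ => μ i

instance [∀ i, IsProbabilityMeasure (μ i)] : IsProbabilityMeasure (boxMeasure μ ℓ) := by
  unfold boxMeasure; infer_instance

theorem measurePreserving_boxPoint [∀ i, IsProbabilityMeasure (μ i)] (ω : ι → Fin ℓ) :
    MeasurePreserving (boxPoint ω) (boxMeasure μ ℓ) (Measure.pi μ) :=
  measurePreserving_pi _ _ fun i => measurePreserving_eval _ (ω i)

variable [DecidableEq ι]

noncomputable def boxInner (H : (ι → Fin ℓ) → (∀ i, X i) → ℝ) : ℝ :=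
  ∫ z, boxProd H z ∂boxMeasure μ ℓ

variable {μ}

theorem measurable_boxProd {H : (ι → Fin ℓ) → (∀ i, X i) → ℝ} (hH : ∀ ω, Measurable (H ω)) :
    Measurable (boxProd H) :=
  Finset.measurable_prod _ fun ω _ => (hH ω).comp (measurable_boxPoint ω)

theorem measurable_boxSlice {H : (ι → Fin ℓ) → (∀ i, X i) → ℝ} (hH : ∀ ω, Measurable (H ω))
    (a : ι) (j : Fin ℓ) : Measurable (boxSlice H a j) :=
  Finset.measurable_prod _ fun ω _ => (hH ω).comp <|
    measurable_update'.comp (((measurable_boxPoint ω).comp measurable_fst).prodMk measurable_snd)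

theorem boxProd_ae_eq [∀ i, IsProbabilityMeasure (μ i)] {H H' : (ι → Fin ℓ) → (∀ i, X i) → ℝ}
    (h : ∀ ω, H ω =ᵐ[Measure.pi μ] H' ω) : boxProd H =ᵐ[boxMeasure μ ℓ] boxProd H' := by
  have h' : ∀ᵐ z ∂boxMeasure μ ℓ, ∀ ω, H ω (boxPoint ω z) = H' ω (boxPoint ω z) :=
    ae_all_iff.2 fun ω => (measurePreserving_boxPoint μ ω).quasiMeasurePreserving.ae_eq (h ω)
  filter_upwards [h'] with z hz
  exact prod_congr rfl fun ω _ => hz ω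

theorem boxInner_const_congr_ae [∀ i, IsProbabilityMeasure (μ i)] {h h' : (∀ i, X i) → ℝ}
    (hh : h =ᵐ[Measure.pi μ] h') :
    (boxInner μ fun _ : ι → Fin ℓ => h) = boxInner μ fun _ : ι → Fin ℓ => h' :=
  integral_congr_ae (boxProd_ae_eq fun _ => hh)

end Box

section CoordinateHolder

variable {ι : Type*} [Fintype ι] [DecidableEq ι] {X : ι → Type*} [∀ i, MeasurableSpace (X i)]
  {μ : ∀ i, Measure (X i)} [∀ i, IsProbabilityMeasure (μ i)] {ℓ : ℕ}
  {H : (ι → Fin ℓ) → (∀ i, X i) → ℝ}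

theorem measurePreserving_update_boxMeasure (a : ι) :
    MeasurePreserving (fun p : (∀ i, Fin ℓ → X i) × (Fin ℓ → X a) => update p.1 a p.2)
      ((boxMeasure μ ℓ).prod (Measure.pi fun _ : Fin ℓ => μ a)) (boxMeasure μ ℓ) :=
  measurePreserving_update (fun i => Measure.pi fun _ : Fin ℓ => μ i) a

theorem integral_boxMeasure_eq_update {F : (∀ i, Fin ℓ → X i) → ℝ} (hF : Measurable F)
    (a : ι) :
    ∫ z, F z ∂boxMeasure μ ℓ =
      ∫ p, F (update p.1 a p.2) ∂(boxMeasure μ ℓ).prod (Measure.pi fun _ : Fin ℓ => μ a) := by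
  have hΦ := measurePreserving_update_boxMeasure (μ := μ) (ℓ := ℓ) a
  rw [← integral_map hΦ.measurable.aemeasurable (hΦ.map_eq ▸ hF.aestronglyMeasurable),
    hΦ.map_eq]

theorem integrable_boxMeasure_iff_update {F : (∀ i, Fin ℓ → X i) → ℝ} (hF : Measurable F)
    (a : ι) :
    Integrable F (boxMeasure μ ℓ) ↔
      Integrable (fun p => F (update p.1 a p.2))
        ((boxMeasure μ ℓ).prod (Measure.pi fun _ : Fin ℓ => μ a)) :=
  ((measurePreserving_update_boxMeasure a).integrable_comp hF.aestronglyMeasurable).symm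

theorem boxInner_eq_integral_boxSlice (hH : ∀ ω, Measurable (H ω)) (a : ι) :
    boxInner μ H = ∫ w, ∏ j, boxSlice H a j (w.1, w.2 j)
      ∂(boxMeasure μ ℓ).prod (Measure.pi fun _ : Fin ℓ => μ a) := by
  simp only [boxInner, integral_boxMeasure_eq_update (measurable_boxProd hH) a, boxProd_update]

theorem boxInner_comp_update_eq_integral_boxSlice (hH : ∀ ω, Measurable (H ω)) (a : ι)
    (j : Fin ℓ) :
    (boxInner μ fun ω => H (update ω a j)) = ∫ w, ∏ k, boxSlice H a j (w.1, w.2 k)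
      ∂(boxMeasure μ ℓ).prod (Measure.pi fun _ : Fin ℓ => μ a) := by
  simp only [boxInner, integral_boxMeasure_eq_update (measurable_boxProd fun ω => hH _) a,
    boxProd_comp_update_update]

theorem integrable_boxProd_iff_boxSlice (hH : ∀ ω, Measurable (H ω)) (a : ι) :
    Integrable (boxProd H) (boxMeasure μ ℓ) ↔ Integrable (fun w => ∏ j, boxSlice H a j (w.1, w.2 j))
      ((boxMeasure μ ℓ).prod (Measure.pi fun _ : Fin ℓ => μ a)) := by
  simp only [integrable_boxMeasure_iff_update (measurable_boxProd hH) a, boxProd_update]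

theorem integrable_boxProd_comp_update_iff_boxSlice (hH : ∀ ω, Measurable (H ω)) (a : ι)
    (j : Fin ℓ) :
    Integrable (boxProd fun ω => H (update ω a j)) (boxMeasure μ ℓ) ↔
      Integrable (fun w => ∏ k, boxSlice H a j (w.1, w.2 k))
        ((boxMeasure μ ℓ).prod (Measure.pi fun _ : Fin ℓ => μ a)) := by
  simp only [integrable_boxMeasure_iff_update (measurable_boxProd fun ω => hH _) a,
    boxProd_comp_update_update]

theorem boxInner_comp_update_nonneg (hℓ : Even ℓ) (hH : ∀ ω, Measurable (H ω)) (a : ι)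
    (j : Fin ℓ) : 0 ≤ boxInner μ fun ω => H (update ω a j) := by
  rw [boxInner_comp_update_eq_integral_boxSlice hH a j]
  exact integral_prod_diag_nonneg _ _ (by simpa using hℓ) _

theorem boxInner_const_nonneg [NeZero ℓ] [Nonempty ι] (hℓ : Even ℓ) {h : (∀ i, X i) → ℝ}
    (hh : Measurable h) : 0 ≤ boxInner μ fun _ : ι → Fin ℓ => h := by
  obtain ⟨a⟩ := ‹Nonempty ι›
  exact boxInner_comp_update_nonneg hℓ (fun _ => hh) a 0

variable [NeZero ℓ]

theorem integrable_boxProd_of_update (hH : ∀ ω, Measurable (H ω)) (a : ι)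
    (hD : ∀ j, Integrable (boxProd fun ω => H (update ω a j)) (boxMeasure μ ℓ)) :
    Integrable (boxProd H) (boxMeasure μ ℓ) :=
  (integrable_boxProd_iff_boxSlice hH a).2 <|
    integrable_prod_of_integrable_diag _ _ (measurable_boxSlice hH a) fun j =>
      (integrable_boxProd_comp_update_iff_boxSlice hH a j).1 (hD j)

theorem abs_boxInner_pow_le_prod_update (hℓ : Even ℓ) (hH : ∀ ω, Measurable (H ω)) (a : ι)
    (hD : ∀ j, Integrable (boxProd fun ω => H (update ω a j)) (boxMeasure μ ℓ)) :
    |boxInner μ H| ^ ℓ ≤ ∏ j, boxInner μ fun ω => H (update ω a j) := by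
  simp only [boxInner_eq_integral_boxSlice hH a, boxInner_comp_update_eq_integral_boxSlice hH a]
  simpa using abs_integral_prod_pow_le_prod_integral_diag _ _ (by simpa using hℓ)
    (measurable_boxSlice hH a)
    ((integrable_boxProd_iff_boxSlice hH a).1 (integrable_boxProd_of_update hH a hD))
    fun j => (integrable_boxProd_comp_update_iff_boxSlice hH a j).1 (hD j)

end CoordinateHolder

section GowersCauchySchwarz

variable {ι : Type*} [Fintype ι] [DecidableEq ι] {X : ι → Type*} [∀ i, MeasurableSpace (X i)]
  {μ : ∀ i, Measure (X i)} [∀ i, IsProbabilityMeasure (μ i)] {ℓ : ℕ} [NeZero ℓ]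
  {H : (ι → Fin ℓ) → (∀ i, X i) → ℝ}

theorem integrable_boxProd_of_piecewise (S : Finset ι) (hH : ∀ ω, Measurable (H ω))
    (hD : ∀ τ, Integrable (boxProd fun ω => H (S.piecewise τ ω)) (boxMeasure μ ℓ)) :
    Integrable (boxProd H) (boxMeasure μ ℓ) := by
  induction S using Finset.induction_on generalizing H with
  | empty => simpa using hD 0
  | insert a S ha ih =>
    refine ih hH fun τ => integrable_boxProd_of_update (fun ω => hH _) a fun j => ?_
    simpa only [piecewise_update_of_notMem ha] using hD (update τ a j)

-- Each factor on the right is repeated `ℓ ^ #Sᶜ` times, so the exponent on the left is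
-- the same for every `S`.
theorem abs_boxInner_pow_le_prod_piecewise (hℓ : Even ℓ) (S : Finset ι)
    (hH : ∀ ω, Measurable (H ω))
    (hD : ∀ τ, Integrable (boxProd fun ω => H (S.piecewise τ ω)) (boxMeasure μ ℓ)) :
    |boxInner μ H| ^ Fintype.card (ι → Fin ℓ) ≤
      ∏ τ, |boxInner μ fun ω => H (S.piecewise τ ω)| := by
  induction S using Finset.induction_on generalizing H with
  | empty => simp
  | insert a S ha ih =>
    set I : (ι → Fin ℓ) → ℝ := fun τ => |boxInner μ fun ω => H ((insert a S).piecewise τ ω)|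
    have hupdate : ∀ τ j, (fun ω => H (S.piecewise τ (update ω a j))) =
        fun ω => H ((insert a S).piecewise (update τ a j) ω) := fun τ j => by
      simp only [piecewise_update_of_notMem ha]
    have hD' : ∀ τ j, Integrable (boxProd fun ω => H (S.piecewise τ (update ω a j)))
        (boxMeasure μ ℓ) := fun τ j => hupdate τ j ▸ hD (update τ a j)
    have hstep : ∀ τ, |boxInner μ fun ω => H (S.piecewise τ ω)| ^ ℓ ≤ ∏ j, I (update τ a j) :=
      fun τ => by
        have := abs_boxInner_pow_le_prod_update hℓ (fun ω => hH (S.piecewise τ ω)) a (hD' τ)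
        simp only [hupdate] at this
        exact this.trans ((le_abs_self _).trans_eq (abs_prod _ _))
    have hIH := ih hH fun τ => integrable_boxProd_of_update (fun ω => hH _) a (hD' τ)
    rw [← pow_le_pow_iff_left₀ (by positivity) (by positivity) (NeZero.ne ℓ)]
    calc (|boxInner μ H| ^ Fintype.card (ι → Fin ℓ)) ^ ℓ
        ≤ (∏ τ, |boxInner μ fun ω => H (S.piecewise τ ω)|) ^ ℓ :=
          pow_le_pow_left₀ (by positivity) hIH ℓ
      _ ≤ ∏ τ, ∏ j, I (update τ a j) := by
          rw [← prod_pow]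
          exact prod_le_prod (fun _ _ => by positivity) fun τ _ => hstep τ
      _ = (∏ τ, I τ) ^ ℓ := by rw [Fintype.prod_prod_update I, Fintype.card_fin, prod_pow]

theorem integrable_boxProd_of_const (hH : ∀ ω, Measurable (H ω))
    (hD : ∀ τ, Integrable (boxProd fun _ : ι → Fin ℓ => H τ) (boxMeasure μ ℓ)) :
    Integrable (boxProd H) (boxMeasure μ ℓ) :=
  integrable_boxProd_of_piecewise univ hH (by simpa using hD)

theorem abs_boxInner_pow_le_prod_const (hℓ : Even ℓ) (hH : ∀ ω, Measurable (H ω))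
    (hD : ∀ τ, Integrable (boxProd fun _ : ι → Fin ℓ => H τ) (boxMeasure μ ℓ)) :
    |boxInner μ H| ^ Fintype.card (ι → Fin ℓ) ≤ ∏ τ, |boxInner μ fun _ : ι → Fin ℓ => H τ| := by
  simpa using abs_boxInner_pow_le_prod_piecewise hℓ univ hH (by simpa using hD)

end GowersCauchySchwarz

theorem boxNormOn_univ {ι : Type*} [Fintype ι] [DecidableEq ι] {X : ι → Type*}
    [∀ i, MeasurableSpace (X i)] (μ : ∀ i, Measure (X i)) (ℓ : ℕ) (f : (∀ i, X i) → ℝ) :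
    boxNormOn μ univ ℓ f =
      (boxInner μ fun _ : ι → Fin ℓ => f) ^ (Fintype.card (ι → Fin ℓ) : ℝ)⁻¹ := by
  rw [boxNormOn, filter_true_of_mem fun ω _ i hi => absurd (mem_univ i) hi, card_univ,
    Fintype.card_fun, Fintype.card_fin, Nat.cast_pow]
  rfl

section Triangle

variable {ι : Type*} [Fintype ι] [DecidableEq ι] {X : ι → Type*} [∀ i, MeasurableSpace (X i)]
  {μ : ∀ i, Measure (X i)} [∀ i, IsProbabilityMeasure (μ i)] {ℓ : ℕ}

theorem boxNormOn_univ_congr_ae {f f' : (∀ i, X i) → ℝ} (hf : f =ᵐ[Measure.pi μ] f') :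
    boxNormOn μ univ ℓ f = boxNormOn μ univ ℓ f' := by
  rw [boxNormOn_univ, boxNormOn_univ, boxInner_const_congr_ae hf]

variable [NeZero ℓ] [Nonempty ι] {f g : (∀ i, X i) → ℝ}

theorem boxNormOn_univ_nonneg (hℓ : Even ℓ) (hf : Measurable f) : 0 ≤ boxNormOn μ univ ℓ f := by
  rw [boxNormOn_univ]
  exact Real.rpow_nonneg (boxInner_const_nonneg hℓ hf) _

theorem boxNormOn_univ_pow_card (hℓ : Even ℓ) (hf : Measurable f) :
    boxNormOn μ univ ℓ f ^ Fintype.card (ι → Fin ℓ) = boxInner μ fun _ : ι → Fin ℓ => f := by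
  rw [boxNormOn_univ,
    Real.rpow_inv_natCast_pow (boxInner_const_nonneg hℓ hf) Fintype.card_ne_zero]

theorem abs_boxInner_ite_le (hℓ : Even ℓ) (hf : Measurable f) (hg : Measurable g)
    (hfD : Integrable (boxProd fun _ : ι → Fin ℓ => f) (boxMeasure μ ℓ))
    (hgD : Integrable (boxProd fun _ : ι → Fin ℓ => g) (boxMeasure μ ℓ))
    (t : Finset (ι → Fin ℓ)) :
    |boxInner μ fun ω => if ω ∈ t then f else g| ≤
      boxNormOn μ univ ℓ f ^ #t * boxNormOn μ univ ℓ g ^ (Fintype.card (ι → Fin ℓ) - #t) := by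
  set N := Fintype.card (ι → Fin ℓ)
  have hf₀ := boxNormOn_univ_nonneg (μ := μ) hℓ hf
  have hg₀ := boxNormOn_univ_nonneg (μ := μ) hℓ hg
  rw [← pow_le_pow_iff_left₀ (abs_nonneg _) (mul_nonneg (pow_nonneg hf₀ _) (pow_nonneg hg₀ _))
    (Fintype.card_ne_zero : N ≠ 0)]
  calc |boxInner μ fun ω => if ω ∈ t then f else g| ^ N
      ≤ ∏ τ, |boxInner μ fun _ : ι → Fin ℓ => if τ ∈ t then f else g| :=
        abs_boxInner_pow_le_prod_const hℓ (fun ω => by split_ifs <;> assumption)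
          fun τ => by split_ifs <;> assumption
    _ = ∏ τ, if τ ∈ t then boxNormOn μ univ ℓ f ^ N else boxNormOn μ univ ℓ g ^ N :=
        prod_congr rfl fun τ _ => by
          split_ifs
          · rw [boxNormOn_univ_pow_card hℓ hf, abs_of_nonneg (boxInner_const_nonneg hℓ hf)]
          · rw [boxNormOn_univ_pow_card hℓ hg, abs_of_nonneg (boxInner_const_nonneg hℓ hg)]
    _ = (boxNormOn μ univ ℓ f ^ #t * boxNormOn μ univ ℓ g ^ (N - #t)) ^ N := by
        rw [prod_ite_mem_univ, prod_const, prod_const, card_univ_sdiff, mul_pow, ← pow_mul,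
          ← pow_mul, ← pow_mul, ← pow_mul, mul_comm N, mul_comm N]

theorem boxInner_add_le_pow (hℓ : Even ℓ) (hf : Measurable f) (hg : Measurable g)
    (hfD : Integrable (boxProd fun _ : ι → Fin ℓ => f) (boxMeasure μ ℓ))
    (hgD : Integrable (boxProd fun _ : ι → Fin ℓ => g) (boxMeasure μ ℓ)) :
    (boxInner μ fun _ : ι → Fin ℓ => fun x => f x + g x) ≤
      (boxNormOn μ univ ℓ f + boxNormOn μ univ ℓ g) ^ Fintype.card (ι → Fin ℓ) := by
  have hint : ∀ t : Finset (ι → Fin ℓ),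
      Integrable (boxProd fun ω => if ω ∈ t then f else g) (boxMeasure μ ℓ) := fun t =>
    integrable_boxProd_of_const (fun ω => by split_ifs <;> assumption)
      fun τ => by split_ifs <;> assumption
  calc (boxInner μ fun _ : ι → Fin ℓ => fun x => f x + g x)
      = ∑ t : Finset (ι → Fin ℓ), boxInner μ fun ω => if ω ∈ t then f else g := by
        simp only [boxInner, boxProd_add_eq_sum]
        exact integral_finsetSum _ fun t _ => hint t
    _ ≤ ∑ t : Finset (ι → Fin ℓ), |boxInner μ fun ω => if ω ∈ t then f else g| :=
        sum_le_sum fun t _ => le_abs_self _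
    _ ≤ _ := sum_le_sum fun t _ => abs_boxInner_ite_le hℓ hf hg hfD hgD t
    _ = _ := Fintype.sum_pow_mul_eq_add_pow _ _ _

theorem boxNormOn_univ_add_le_of_measurable (hℓ : Even ℓ) (hf : Measurable f)
    (hg : Measurable g) (hfD : Integrable (boxProd fun _ : ι → Fin ℓ => f) (boxMeasure μ ℓ))
    (hgD : Integrable (boxProd fun _ : ι → Fin ℓ => g) (boxMeasure μ ℓ)) :
    boxNormOn μ univ ℓ (fun x => f x + g x) ≤ boxNormOn μ univ ℓ f + boxNormOn μ univ ℓ g := by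
  have hfg₀ := add_nonneg (boxNormOn_univ_nonneg (μ := μ) hℓ hf)
    (boxNormOn_univ_nonneg (μ := μ) hℓ hg)
  calc boxNormOn μ univ ℓ (fun x => f x + g x)
      ≤ ((boxNormOn μ univ ℓ f + boxNormOn μ univ ℓ g) ^ Fintype.card (ι → Fin ℓ)) ^
          (Fintype.card (ι → Fin ℓ) : ℝ)⁻¹ := by
        rw [boxNormOn_univ]
        exact Real.rpow_le_rpow (boxInner_const_nonneg hℓ (hf.add hg))
          (boxInner_add_le_pow hℓ hf hg hfD hgD) (by positivity)
    _ = _ := Real.pow_rpow_inv_natCast hfg₀ Fintype.card_ne_zero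

end Triangle

/-- Triangle inequality for the `ℓ`-box norm. -/
theorem boxNorm_add_le {ι : Type*} [Fintype ι] [DecidableEq ι]
    (hcard : 2 ≤ Fintype.card ι)
    {X : ι → Type*} [∀ i, MeasurableSpace (X i)] (μ : ∀ i, Measure (X i))
    [∀ i, IsProbabilityMeasure (μ i)]
    (ℓ : ℕ) (hℓ : 2 ≤ ℓ) (hev : Even ℓ)
    (f g : (∀ i, X i) → ℝ)
    (hf : Integrable f (Measure.pi μ)) (hg : Integrable g (Measure.pi μ))
    (hboxf : Integrable
      (fun x : ∀ i, Fin ℓ → X i => ∏ ω : ι → Fin ℓ, f (fun i => x i (ω i)))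
      (Measure.pi fun i => Measure.pi fun _ : Fin ℓ => μ i))
    (hboxg : Integrable
      (fun x : ∀ i, Fin ℓ → X i => ∏ ω : ι → Fin ℓ, g (fun i => x i (ω i)))
      (Measure.pi fun i => Measure.pi fun _ : Fin ℓ => μ i)) :
    boxNormOn μ Finset.univ ℓ (fun x => f x + g x) ≤
      boxNormOn μ Finset.univ ℓ f + boxNormOn μ Finset.univ ℓ g := by
  have : NeZero ℓ := ⟨by omega⟩
  have : Nonempty ι := Fintype.card_pos_iff.1 (by omega)
  have hfg : (fun x => f x + g x) =ᵐ[Measure.pi μ] fun x => hf.1.mk f x + hg.1.mk g x :=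
    hf.1.ae_eq_mk.add hg.1.ae_eq_mk
  rw [boxNormOn_univ_congr_ae hf.1.ae_eq_mk, boxNormOn_univ_congr_ae hg.1.ae_eq_mk,
    boxNormOn_univ_congr_ae hfg]
  exact boxNormOn_univ_add_le_of_measurable hev hf.1.stronglyMeasurable_mk.measurable
    hg.1.stronglyMeasurable_mk.measurable (hboxf.congr (boxProd_ae_eq fun _ => hf.1.ae_eq_mk))
    (hboxg.congr (boxProd_ae_eq fun _ => hg.1.ae_eq_mk))
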